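/- arXiv:1210.6591 — 9 statements merged into one kernel-verified Lean document; each statement's English description precedes it below -/
import Mathlib

section
/- An ascending union of free groups of rank at most 2 which is not finitely generated is locally free but not free. -/
/-!
Every finitely generated subgroup lies in some `Kₙ`, hence is free by Nielsen–Schreier.
If `K` were free, its basis would be infinite since `K` is not finitely generated, so three
basis elements would lie in a common `Kₙ`. Abelianizing, `Kₙ` maps onto a subgroup of the free
abelian group on the basis that is spanned by at most two elements yet contains three independent
basis vectors.
-/

open Subgroup Function

theorem Subgroup.exists_le_of_fg_of_le_iSup {G ι : Type*} [Group G] [Nonempty ι]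
    {c : ι → Subgroup G} (hc : Directed (· ≤ ·) c) {H : Subgroup G} (hH : H.FG)
    (hle : H ≤ ⨆ i, c i) : ∃ i, H ≤ c i := by
  classical
  obtain ⟨S, rfl⟩ := hH
  have hmem (x : G) (hx : x ∈ S) : ∃ i, x ∈ c i :=
    (mem_iSup_of_directed hc).mp (hle (subset_closure hx))
  choose! idx hidx using hmem
  obtain ⟨j, hj⟩ := hc.finset_le (S.image idx)
  refine ⟨j, closure_le _ |>.mpr fun x hx => ?_⟩
  exact hj _ (Finset.mem_image_of_mem _ hx) (hidx x hx)

theorem Subgroup.isFreeGroup_of_le {G : Type*} [Group G] {H L : Subgroup G} [IsFreeGroup L]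
    (h : H ≤ L) : IsFreeGroup H :=
  IsFreeGroup.ofMulEquiv (subgroupOfEquivOfLe h)

theorem FreeGroup.toAdd_mem_span_range_of {κ M : Type*} [AddCommGroup M]
    (φ : FreeGroup κ →* Multiplicative M) (x : FreeGroup κ) :
    (φ x).toAdd ∈ Submodule.span ℤ (Set.range fun k => (φ (FreeGroup.of k)).toAdd) := by
  induction x using FreeGroup.induction_on with
  | C1 => simp
  | of k => exact Submodule.subset_span ⟨k, rfl⟩
  | inv_of k ih => simpa using Submodule.neg_mem _ ih
  | mul x y hx hy => simpa using Submodule.add_mem _ hx hy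

theorem IsFreeGroup.card_le_of_of_mem_range {G ι κ : Type*} [Group G] [IsFreeGroup G]
    [Fintype ι] [Fintype κ] {f : ι → Generators G} (hf : Injective f)
    (ψ : FreeGroup κ →* G) (h : ∀ i, of (f i) ∈ ψ.range) :
    Fintype.card ι ≤ Fintype.card κ := by
  classical
  let φ : G →* Multiplicative (Generators G →₀ ℤ) :=
    lift fun s => Multiplicative.ofAdd (Finsupp.single s 1)
  let w : Finset (Generators G →₀ ℤ) :=
    Finset.univ.image fun k => (φ (ψ (FreeGroup.of k))).toAdd
  have hindep : LinearIndependent ℤ fun i => Finsupp.single (f i) (1 : ℤ) :=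
    Finsupp.basisSingleOne.linearIndependent.comp f hf
  have hspan : Set.range (fun i => Finsupp.single (f i) (1 : ℤ)) ⊆
      Submodule.span ℤ (w : Set (Generators G →₀ ℤ)) := by
    rintro _ ⟨i, rfl⟩
    obtain ⟨x, hx⟩ := h i
    have := FreeGroup.toAdd_mem_span_range_of (φ.comp ψ) x
    simpa [w, φ, hx] using this
  have := linearIndependent_le_span' _ hindep _ hspan
  rw [Cardinal.mk_fintype, Nat.cast_le] at this
  simp only [Finset.coe_sort_coe, Fintype.card_coe] at this
  exact this.trans Finset.card_image_le

theorem IsFreeGroup.infinite_generators_of_not_fg {G : Type*} [Group G] [IsFreeGroup G]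
    (h : ¬ Group.FG G) : Infinite (Generators G) := by
  by_contra hfin
  rw [not_infinite_iff_finite] at hfin
  exact h <| Group.fg_of_surjective (f := (toFreeGroup G).symm.toMonoidHom)
    (toFreeGroup G).symm.surjective

theorem stmt_1 (K : Type*) [Group K] (c : ℕ → Subgroup K)
    (hmono : Monotone c) (hunion : ⨆ n, c n = ⊤)
    (hfree : ∀ n, ∃ m : ℕ, m ≤ 2 ∧ Nonempty ((c n) ≃* FreeGroup (Fin m)))
    (hnfg : ¬ Group.FG K) :
    (∀ H : Subgroup K, H.FG → IsFreeGroup H) ∧ ¬ IsFreeGroup K := by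
  have hbound {H : Subgroup K} (hH : H.FG) : ∃ n, H ≤ c n :=
    exists_le_of_fg_of_le_iSup hmono.directed_le hH (hunion ▸ le_top)
  have hcfree (n : ℕ) : ∃ m ≤ 2, ∃ ψ : FreeGroup (Fin m) →* K, ψ.range = c n := by
    obtain ⟨m, hm, ⟨e⟩⟩ := hfree n
    refine ⟨m, hm, (c n).subtype.comp e.symm.toMonoidHom, ?_⟩
    rw [MonoidHom.range_comp, MonoidHom.range_eq_top.mpr e.symm.surjective,
      ← MonoidHom.range_eq_map, range_subtype]
  refine ⟨fun H hH => ?_, fun hK => ?_⟩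
  · obtain ⟨n, hn⟩ := hbound hH
    obtain ⟨m, -, ⟨e⟩⟩ := hfree n
    have := IsFreeGroup.ofMulEquiv e.symm
    exact isFreeGroup_of_le hn
  · have := IsFreeGroup.infinite_generators_of_not_fg hnfg
    let f : Fin 3 ↪ IsFreeGroup.Generators K := Fin.valEmbedding.trans (Infinite.natEmbedding _)
    obtain ⟨n, hn⟩ := hbound (Group.fg_iff_subgroup_fg _ |>.mp
      (Group.closure_finite_fg (Set.range (IsFreeGroup.of ∘ f))))
    obtain ⟨m, hm, ψ, hψ⟩ := hcfree n
    have := IsFreeGroup.card_le_of_of_mem_range f.injective ψ fun i =>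
      hψ ▸ hn (subset_closure ⟨i, rfl⟩)
    simp only [Fintype.card_fin] at this
    omega
end

section
/- The group G = ⟨a, b, t | t⁻¹at = b, t⁻¹bt = aba⁻¹⟩ is isomorphic to the semidirect product F₃ ⋊_θ ℤ, where F₃ is free on x, y, z and the generator of ℤ acts by the automorphism θ: x ↦ y, y ↦ z, z ↦ y²x⁻¹. -/
/-!
In `F₃ ⋊ ℤ` the generator `u` of `ℤ` satisfies `u n u⁻¹ = θ n`, so `t := u⁻¹` conjugates as in the
presentation (`nᵗ = θ n`). Both groups are then described by pairs `(f, s)` with `f : F₃ →* K` and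
`f ∘ θ = conj s ∘ f`: the semidirect product is the universal such pair, and `G` receives a map from
any such pair via `a ↦ f x s⁻¹`, `b ↦ f y s⁻¹`, `t ↦ s⁻¹`, because its second relation is
`θ (x⁻¹ z) = y x⁻¹` in disguise. Conversely, by the two relations, `x ↦ a t⁻¹`, `y ↦ b t⁻¹`,
`z ↦ t⁻¹ b` with `s = t⁻¹` is such a pair in `G`. The two resulting maps are inverse to each other
on generators.
-/

/-- Generators: `0 = a`, `1 = b`, `2 = t`.  Relations of
`⟨a, b, t | t⁻¹at = b, t⁻¹bt = aba⁻¹⟩`. -/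
def grels : Set (FreeGroup (Fin 3)) :=
  {(FreeGroup.of 2)⁻¹ * FreeGroup.of 0 * FreeGroup.of 2 * (FreeGroup.of 1)⁻¹,
   (FreeGroup.of 2)⁻¹ * FreeGroup.of 1 * FreeGroup.of 2 *
     (FreeGroup.of 0 * FreeGroup.of 1 * (FreeGroup.of 0)⁻¹)⁻¹}

open Multiplicative SemidirectProduct

section ConjugationPairs

variable {N K : Type*} [Group N] [Group K]

theorem FreeGroup.map_apply_eq_conj {α : Type*} (θ : FreeGroup α →* FreeGroup α)
    (f : FreeGroup α →* K) (s : K) (h : ∀ i, f (θ (of i)) = s * f (of i) * s⁻¹)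
    (w : FreeGroup α) : f (θ w) = s * f w * s⁻¹ :=
  DFunLike.congr_fun (FreeGroup.ext_hom (f.comp θ) ((MulAut.conj s).toMonoidHom.comp f) h) w

variable {θ : MulAut N}

theorem map_zpow_apply_eq_conj {f : N →* K} {s : K} (h : ∀ n, f (θ n) = s * f n * s⁻¹)
    (k : ℤ) (n : N) : f ((θ ^ k) n) = s ^ k * f n * (s ^ k)⁻¹ := by
  induction k using Int.induction_on generalizing n with
  | zero => simp
  | succ k ih => rw [zpow_add_one, MulAut.mul_apply, ih, h, zpow_add_one]; group
  | pred k ih =>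
    have h' : f (θ⁻¹ n) = s⁻¹ * f n * s := by
      conv_rhs => rw [← MulAut.apply_inv_self N θ n, h]
      group
    rw [zpow_sub_one, MulAut.mul_apply, ih, h', zpow_sub_one]; group

namespace SemidirectProduct

def liftZPowers (f : N →* K) (s : K) (h : ∀ n, f (θ n) = s * f n * s⁻¹) :
    N ⋊[zpowersHom (MulAut N) θ] Multiplicative ℤ →* K :=
  lift f (zpowersHom K s) fun g => MonoidHom.ext (map_zpow_apply_eq_conj h g.toAdd)

@[simp] theorem liftZPowers_inl (f : N →* K) (s : K)
    (h : ∀ n, f (θ n) = s * f n * s⁻¹) (n : N) : liftZPowers f s h (inl n) = f n :=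
  lift_inl _ _ _ n

@[simp] theorem liftZPowers_inr (f : N →* K) (s : K)
    (h : ∀ n, f (θ n) = s * f n * s⁻¹) (k : ℤ) : liftZPowers f s h (inr (ofAdd k)) = s ^ k :=
  lift_inr _ _ _ _

theorem inl_aut_zpowers (n : N) :
    (inl (θ n) : N ⋊[zpowersHom (MulAut N) θ] Multiplicative ℤ)
      = inr (ofAdd 1) * inl n * (inr (ofAdd 1))⁻¹ := by
  rw [← map_inv, ← inl_aut, zpowersHom_apply, toAdd_ofAdd, zpow_one]

end SemidirectProduct

end ConjugationPairs

namespace FreeByCyclic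

local notation "F₃" => FreeGroup (Fin 3)
local notation "𝐱" => (FreeGroup.of 0 : F₃)
local notation "𝐲" => (FreeGroup.of 1 : F₃)
local notation "𝐳" => (FreeGroup.of 2 : F₃)

def thetaHom : F₃ →* F₃ := FreeGroup.lift ![𝐲, 𝐳, 𝐲 ^ 2 * 𝐱⁻¹]

def thetaInvHom : F₃ →* F₃ := FreeGroup.lift ![𝐳⁻¹ * 𝐱 ^ 2, 𝐱, 𝐲]

def theta : MulAut F₃ :=
  thetaHom.toMulEquiv thetaInvHom
    (by ext i; fin_cases i <;> simp [thetaHom, thetaInvHom])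
    (by ext i; fin_cases i <;> simp [thetaHom, thetaInvHom])

@[simp] theorem theta_of_zero : theta 𝐱 = 𝐲 := by simp [theta, thetaHom]
@[simp] theorem theta_of_one : theta 𝐲 = 𝐳 := by simp [theta, thetaHom]
@[simp] theorem theta_of_two : theta 𝐳 = 𝐲 ^ 2 * 𝐱⁻¹ := by simp [theta, thetaHom]

local notation "𝐚" => (PresentedGroup.of 0 : PresentedGroup grels)
local notation "𝐛" => (PresentedGroup.of 1 : PresentedGroup grels)
local notation "𝐭" => (PresentedGroup.of 2 : PresentedGroup grels)

section Lift

variable {K : Type*} [Group K]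

def grelsLift (a b t : K) (h₁ : t⁻¹ * a * t = b) (h₂ : t⁻¹ * b * t = a * b * a⁻¹) :
    PresentedGroup grels →* K :=
  PresentedGroup.toGroup (f := ![a, b, t]) <| by
    rintro r (rfl | rfl) <;> simp [h₁, h₂]

@[simp] theorem grelsLift_of (a b t : K) (h₁ h₂) (i : Fin 3) :
    grelsLift a b t h₁ h₂ (.of i) = ![a, b, t] i :=
  PresentedGroup.toGroup.of _

def liftOfConj (f : F₃ →* K) (s : K) (hf : ∀ w, f (theta w) = s * f w * s⁻¹) :
    PresentedGroup grels →* K :=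
  grelsLift (f 𝐱 * s⁻¹) (f 𝐲 * s⁻¹) s⁻¹
    (by rw [inv_inv, ← mul_assoc, ← hf, theta_of_zero])
    (by
      have hrel : theta (𝐱⁻¹ * 𝐳) = 𝐲 * 𝐱⁻¹ := by simp [pow_two, mul_assoc]
      calc s⁻¹⁻¹ * (f 𝐲 * s⁻¹) * s⁻¹ = f 𝐱 * s⁻¹ * (s * f (𝐱⁻¹ * 𝐳) * s⁻¹) := by
            rw [map_mul, map_inv, ← theta_of_one, hf]; group
        _ = f 𝐱 * s⁻¹ * f (𝐲 * 𝐱⁻¹) := by rw [← hf, hrel]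
        _ = f 𝐱 * s⁻¹ * (f 𝐲 * s⁻¹) * (f 𝐱 * s⁻¹)⁻¹ := by rw [map_mul, map_inv]; group)

end Lift

theorem rel_conj_a : 𝐭⁻¹ * 𝐚 * 𝐭 = 𝐛 :=
  PresentedGroup.mk_eq_mk_of_mul_inv_mem (Set.mem_insert _ _)

theorem rel_conj_b : 𝐭⁻¹ * 𝐛 * 𝐭 = 𝐚 * 𝐛 * 𝐚⁻¹ :=
  PresentedGroup.mk_eq_mk_of_mul_inv_mem (Set.mem_insert_of_mem _ rfl)

def freeToPresented : F₃ →* PresentedGroup grels := FreeGroup.lift ![𝐚 * 𝐭⁻¹, 𝐛 * 𝐭⁻¹, 𝐭⁻¹ * 𝐛]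

theorem freeToPresented_theta (w : F₃) :
    freeToPresented (theta w) = 𝐭⁻¹ * freeToPresented w * 𝐭⁻¹⁻¹ := by
  refine FreeGroup.map_apply_eq_conj theta.toMonoidHom freeToPresented 𝐭⁻¹ (fun i => ?_) w
  fin_cases i <;>
    simp only [freeToPresented, Fin.isValue, Fin.zero_eta, Fin.mk_one, Fin.reduceFinMk,
      MulEquiv.toMonoidHom_eq_coe, MonoidHom.coe_coe, theta_of_zero, theta_of_one, theta_of_two,
      FreeGroup.lift_apply_of, Matrix.cons_val, Matrix.cons_val_one, Matrix.cons_val_zero,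
      map_mul, map_pow, map_inv, mul_inv_rev]
  · rw [← rel_conj_a]; group
  · group
  · calc (𝐛 * 𝐭⁻¹) ^ 2 * (𝐭 * 𝐚⁻¹) = 𝐭⁻¹ * 𝐚 * 𝐭 * 𝐭⁻¹ * 𝐛 * 𝐚⁻¹ := by
          rw [rel_conj_a, pow_two]; group
      _ = 𝐭⁻¹ * (𝐚 * 𝐛 * 𝐚⁻¹) := by group
      _ = 𝐭⁻¹ * (𝐭⁻¹ * 𝐛) * 𝐭 := by rw [← rel_conj_b]; group

def presentedEquivSemidirect :
    PresentedGroup grels ≃* F₃ ⋊[zpowersHom _ theta] Multiplicative ℤ :=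
  MonoidHom.toMulEquiv
    (liftOfConj inl (inr (ofAdd 1)) inl_aut_zpowers)
    (liftZPowers freeToPresented 𝐭⁻¹ freeToPresented_theta)
    (PresentedGroup.ext fun i => by fin_cases i <;> simp [liftOfConj, freeToPresented])
    (by
      refine hom_ext (FreeGroup.ext_hom _ _ fun i => ?_) (MonoidHom.ext_mint ?_)
      · fin_cases i <;> simp [liftOfConj, freeToPresented, ← mul_assoc, ← inl_aut_zpowers]
      · simp [liftOfConj])

end FreeByCyclic

open FreeByCyclic in
/-- `G ≅ F₃ ⋊_θ ℤ`, where `θ : x ↦ y, y ↦ z, z ↦ y²x⁻¹` (generators of the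
free group of rank 3 are `0 = x`, `1 = y`, `2 = z`). -/
theorem stmt_5 :
    ∃ θ : MulAut (FreeGroup (Fin 3)),
      θ (FreeGroup.of 0) = FreeGroup.of 1 ∧
      θ (FreeGroup.of 1) = FreeGroup.of 2 ∧
      θ (FreeGroup.of 2) = (FreeGroup.of 1) ^ 2 * (FreeGroup.of 0)⁻¹ ∧
      Nonempty (PresentedGroup grels ≃*
        FreeGroup (Fin 3) ⋊[zpowersHom _ θ] Multiplicative ℤ) :=
  ⟨theta, theta_of_zero, theta_of_one, theta_of_two, ⟨presentedEquivSemidirect⟩⟩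
end

section
/- In the group G = ⟨a, b, t | t⁻¹at = b, t⁻¹bt = aba⁻¹⟩, setting x = a t⁻¹, the element x satisfies the relation t⁻²xt³ · x · t⁻¹ x⁻² = 1 (i.e., G has the one-relator presentation ⟨x, t | t⁻²xt³ x t⁻¹ x⁻²⟩). -/
/-- With `b = t⁻¹at` and `a = xt`, the relation `t⁻¹bt = aba⁻¹` reads `t⁻²xt³ = x²tx⁻¹`. -/
theorem relator_eq_one_of_conj {G : Type*} [Group G] {a b t : G}
    (hab : t⁻¹ * a * t = b) (hba : t⁻¹ * b * t = a * b * a⁻¹) :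
    t⁻¹ ^ 2 * (a * t⁻¹) * t ^ 3 * (a * t⁻¹) * t⁻¹ * (a * t⁻¹)⁻¹ ^ 2 = 1 := by
  subst hab
  calc _ = t⁻¹ * (t⁻¹ * a * t) * t * (a * (t⁻¹ * a * t) * a⁻¹)⁻¹ := by
        simp only [pow_succ, pow_zero, one_mul, mul_inv_rev, inv_inv, mul_assoc,
          inv_mul_cancel_left]
    _ = 1 := by rw [hba, mul_inv_cancel]

namespace PresentedGroup

theorem grels_conj_a :
    (of 2 : PresentedGroup grels)⁻¹ * of 0 * of 2 = of 1 := by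
  simpa only [of, map_mul, map_inv] using mk_eq_mk_of_mul_inv_mem (rels := grels) (Or.inl rfl)

theorem grels_conj_b :
    (of 2 : PresentedGroup grels)⁻¹ * of 1 * of 2 = of 0 * of 1 * (of 0)⁻¹ := by
  simpa only [of, map_mul, map_inv] using mk_eq_mk_of_mul_inv_mem (rels := grels) (Or.inr rfl)

end PresentedGroup

theorem stmt_6 :
    ∀ x t : PresentedGroup grels,
      t = PresentedGroup.of 2 →
      x = PresentedGroup.of 0 * t⁻¹ →
      t⁻¹ ^ 2 * x * t ^ 3 * x * t⁻¹ * x⁻¹ ^ 2 = 1 := by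
  rintro x t rfl rfl
  exact relator_eq_one_of_conj PresentedGroup.grels_conj_a PresentedGroup.grels_conj_b
end

section
/- The kernel of the homomorphism φ : G → ℤ with φ(t) = 1, φ(a) = φ(b) = 0, where G = ⟨a, b, t | t⁻¹at = b, t⁻¹bt = aba⁻¹⟩, equals the ascending union of the conjugate subgroups tⁿ⟨a,b⟩t⁻ⁿ for n ≥ 0. -/
private lemma grels_mk_eq_one {r : FreeGroup (Fin 3)} (hr : r ∈ grels) :
    PresentedGroup.mk grels r = 1 :=
  (QuotientGroup.eq_one_iff r).2 (Subgroup.subset_normalClosure hr)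

private lemma rel1 : (PresentedGroup.of 2 : PresentedGroup grels)⁻¹ * PresentedGroup.of 0 *
    PresentedGroup.of 2 = PresentedGroup.of 1 := by
  have h := grels_mk_eq_one (r := (FreeGroup.of 2)⁻¹ * FreeGroup.of 0 * FreeGroup.of 2 *
    (FreeGroup.of 1)⁻¹) (Set.mem_insert _ _)
  simp only [map_mul, map_inv] at h
  exact mul_inv_eq_one.mp h

private lemma rel2 : (PresentedGroup.of 2 : PresentedGroup grels)⁻¹ * PresentedGroup.of 1 *
    PresentedGroup.of 2 = PresentedGroup.of 0 * PresentedGroup.of 1 * (PresentedGroup.of 0)⁻¹ := by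
  have h := grels_mk_eq_one (r := (FreeGroup.of 2)⁻¹ * FreeGroup.of 1 * FreeGroup.of 2 *
    (FreeGroup.of 0 * FreeGroup.of 1 * (FreeGroup.of 0)⁻¹)⁻¹)
    (Set.mem_insert_of_mem _ rfl)
  simp only [map_mul, map_inv] at h
  exact mul_inv_eq_one.mp h

private abbrev Hab : Subgroup (PresentedGroup grels) :=
  Subgroup.closure {PresentedGroup.of 0, PresentedGroup.of 1}

private lemma ha_mem : (PresentedGroup.of 0 : PresentedGroup grels) ∈ Hab :=
  Subgroup.subset_closure (Set.mem_insert _ _)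

private lemma hb_mem : (PresentedGroup.of 1 : PresentedGroup grels) ∈ Hab :=
  Subgroup.subset_closure (Set.mem_insert_of_mem _ rfl)

private lemma conj_mem {h : PresentedGroup grels} (hh : h ∈ Hab) :
    (PresentedGroup.of 2)⁻¹ * h * PresentedGroup.of 2 ∈ Hab := by
  induction hh using Subgroup.closure_induction with
  | mem x hx =>
    rcases hx with rfl | rfl
    · rw [rel1]; exact hb_mem
    · rw [rel2]; exact Hab.mul_mem (Hab.mul_mem ha_mem hb_mem) (Hab.inv_mem ha_mem)
  | one => simpa using Hab.one_mem
  | mul x y _ _ hx hy =>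
    have := Hab.mul_mem hx hy
    convert this using 1; group
  | inv x _ hx =>
    have := Hab.inv_mem hx
    convert this using 1; group

private lemma conj_pow_mem (k : ℕ) {h : PresentedGroup grels} (hh : h ∈ Hab) :
    ((PresentedGroup.of 2 : PresentedGroup grels) ^ k)⁻¹ * h * PresentedGroup.of 2 ^ k ∈ Hab := by
  induction k with
  | zero => simpa using hh
  | succ n ih =>
    have := conj_mem ih
    convert this using 1
    rw [pow_succ]; group

private def Sgrp : Subgroup (PresentedGroup grels) where
  carrier := {g | ∃ n m : ℕ, ∃ h ∈ Hab, g = PresentedGroup.of 2 ^ n * h *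
    ((PresentedGroup.of 2 : PresentedGroup grels) ^ m)⁻¹}
  one_mem' := ⟨0, 0, 1, Hab.one_mem, by group⟩
  mul_mem' := by
    rintro g₁ g₂ ⟨n₁, m₁, h₁, hh₁, rfl⟩ ⟨n₂, m₂, h₂, hh₂, rfl⟩
    refine ⟨n₁ + n₂, m₂ + m₁,
      ((PresentedGroup.of 2 ^ n₂)⁻¹ * h₁ * PresentedGroup.of 2 ^ n₂) *
      ((PresentedGroup.of 2 ^ m₁)⁻¹ * h₂ * PresentedGroup.of 2 ^ m₁),
      Hab.mul_mem (conj_pow_mem n₂ hh₁) (conj_pow_mem m₁ hh₂), ?_⟩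
    rw [pow_add, pow_add]; group
  inv_mem' := by
    rintro g ⟨n, m, h, hh, rfl⟩
    exact ⟨m, n, h⁻¹, Hab.inv_mem hh, by group⟩

private lemma mem_Sgrp (g : PresentedGroup grels) : g ∈ Sgrp := by
  refine PresentedGroup.generated_by grels Sgrp (fun j => ?_) g
  fin_cases j
  · exact show (PresentedGroup.of (0 : Fin 3) : PresentedGroup grels) ∈ Sgrp from
      ⟨0, 0, PresentedGroup.of 0, ha_mem, by group⟩
  · exact show (PresentedGroup.of (1 : Fin 3) : PresentedGroup grels) ∈ Sgrp from
      ⟨0, 0, PresentedGroup.of 1, hb_mem, by group⟩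
  · exact show (PresentedGroup.of (2 : Fin 3) : PresentedGroup grels) ∈ Sgrp from
      ⟨1, 0, 1, Hab.one_mem, by group⟩

theorem stmt_7 (φ : PresentedGroup grels →* Multiplicative ℤ)
    (ht : φ (PresentedGroup.of 2) = Multiplicative.ofAdd 1)
    (ha : φ (PresentedGroup.of 0) = 1) (hb : φ (PresentedGroup.of 1) = 1) :
    φ.ker = ⨆ n : ℕ,
      Subgroup.map (MulAut.conj ((PresentedGroup.of 2 : PresentedGroup grels) ^ n)).toMonoidHom
        (Subgroup.closure {PresentedGroup.of 0, PresentedGroup.of 1}) := by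
  have φH : ∀ h ∈ Hab, φ h = 1 := by
    intro h hh
    induction hh using Subgroup.closure_induction with
    | mem x hx => rcases hx with rfl | rfl <;> assumption
    | one => simp
    | mul x y _ _ hx hy => rw [map_mul, hx, hy, mul_one]
    | inv x _ hx => rw [map_inv, hx, inv_one]
  apply le_antisymm
  · intro g hg
    obtain ⟨n, m, h, hh, rfl⟩ := mem_Sgrp g
    have hg' : φ (PresentedGroup.of 2 ^ n * h * (PresentedGroup.of 2 ^ m)⁻¹) = 1 := hg
    rw [map_mul, map_mul, map_inv, map_pow, map_pow, ht, φH h hh, mul_one] at hg'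
    have hnm : (n : ℤ) = (m : ℤ) := by
      have := mul_inv_eq_one.mp hg'
      simpa [← ofAdd_nsmul] using this
    have hnm' : n = m := by exact_mod_cast hnm
    subst hnm'
    exact Subgroup.mem_iSup_of_mem n ⟨h, hh, rfl⟩
  · refine iSup_le fun n => ?_
    rintro x ⟨h, hh, rfl⟩
    have h1 : φ h = 1 := φH h hh
    show φ (PresentedGroup.of 2 ^ n * h * (PresentedGroup.of 2 ^ n)⁻¹) = 1
    rw [map_mul, map_mul, map_inv, h1, mul_one, mul_inv_cancel]
end

section
/- The kernel of the homomorphism φ : G → ℤ with φ(t) = 1, φ(a) = φ(b) = 0, where G = ⟨a, b, t | t⁻¹at = b, t⁻¹bt = aba⁻¹⟩, has infinite cyclic abelianization. -/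
/-!
The kernel `K` of `φ` is generated by the conjugates `tⁿ a t⁻ⁿ` and `tⁿ b t⁻ⁿ`: they generate a
subgroup normalized by `t`, hence normal, and modulo it every element is a power of `t`, on which `φ`
is injective. Conjugation by `t` is an automorphism `τ` of `K` with `τ b = a` and `τ (a b a⁻¹) = b`,
so `τⁿ b` and `τⁿ⁺¹ b` have the same image in `Kᵃᵇ`. Hence `Kᵃᵇ` is generated by the image of `b`,
which the exponent sum of `a` and `b`, a homomorphism `G → ℤ`, sends to `1`.
-/

open Subgroup Multiplicative

section Group

variable {G : Type*} [Group G]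

def zpowersConjClosure (t : G) (X : Set G) : Subgroup G :=
  closure (⋃ n : ℤ, MulAut.conj (t ^ n) '' X)

theorem subset_zpowersConjClosure (t : G) (X : Set G) : X ⊆ zpowersConjClosure t X :=
  fun x hx ↦ subset_closure (Set.mem_iUnion.mpr ⟨0, x, hx, by simp⟩)

theorem mem_normalizer_zpowersConjClosure (t : G) (X : Set G) :
    t ∈ normalizer (zpowersConjClosure t X : Set G) := by
  apply normalizer_le_normalizer_closure
  rw [mem_normalizer_iff_conj_image_eq, Set.image_iUnion]
  simp_rw [Set.image_image, ← MulAut.mul_apply, ← map_mul, ← zpow_one_add]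
  exact (add_left_surjective 1).iUnion_comp fun n ↦ MulAut.conj (t ^ n) '' X

theorem zpowersConjClosure_normal {t : G} {X : Set G} (h : closure (insert t X) = ⊤) :
    (zpowersConjClosure t X).Normal := by
  rw [← normalizer_eq_top_iff, eq_top_iff, ← h, closure_le, Set.insert_subset_iff]
  exact ⟨mem_normalizer_zpowersConjClosure t X,
    fun x hx ↦ le_normalizer (subset_zpowersConjClosure t X hx)⟩

theorem zpowersConjClosure_sup_zpowers {t : G} {X : Set G} (h : closure (insert t X) = ⊤) :
    zpowersConjClosure t X ⊔ zpowers t = ⊤ := by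
  rw [eq_top_iff, ← h, closure_le, Set.insert_subset_iff]
  exact ⟨mem_sup_right (mem_zpowers t),
    fun x hx ↦ mem_sup_left (subset_zpowersConjClosure t X hx)⟩

theorem zpowersConjClosure_le {N : Subgroup G} [N.Normal] (t : G) {X : Set G} (hX : X ⊆ N) :
    zpowersConjClosure t X ≤ N := by
  rw [zpowersConjClosure, closure_le, Set.iUnion_subset_iff]
  rintro n _ ⟨x, hx, rfl⟩
  exact Normal.conj_mem ‹_› x (hX hx) (t ^ n)

theorem MulAut.conjNormal_zpow_apply {H : Subgroup G} [H.Normal] (g : G) (n : ℤ) (h : H) :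
    ((MulAut.conjNormal g ^ n) h : G) = MulAut.conj (g ^ n) h := by
  rw [← map_zpow, MulAut.conjNormal_apply, MulAut.conj_apply]

theorem ker_le_of_sup_zpowers_eq_top {φ : G →* Multiplicative ℤ} {S : Subgroup G} [S.Normal]
    {t : G} (ht : φ t = ofAdd 1) (hS : S ≤ φ.ker)
    (hsup : S ⊔ zpowers t = ⊤) : φ.ker ≤ S := by
  intro g hg
  obtain ⟨s, hs, _, ⟨n, rfl⟩, rfl⟩ := mem_sup_of_normal_left.mp (hsup ▸ mem_top g)
  have hn : ofAdd n = 1 := by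
    simpa [(MonoidHom.mem_ker).mp (hS hs), ht, ← ofAdd_zsmul] using (MonoidHom.mem_ker).mp hg
  obtain rfl : n = 0 := ofAdd_eq_one.mp hn
  simpa using hs

theorem Abelianization.zpowers_eq_top_of_le_closure {K : Subgroup G} {T : Set G}
    (hK : K ≤ closure T) (hT : T ⊆ K) {z : Abelianization K}
    (hz : ∀ k : K, (k : G) ∈ T → of k ∈ zpowers z) : zpowers z = ⊤ := by
  have hT' : closure T ≤ ((zpowers z).comap of).map K.subtype := by
    rw [closure_le]
    intro y hy
    exact mem_map.mpr ⟨⟨y, hT hy⟩, mem_comap.mpr (hz ⟨y, hT hy⟩ hy), rfl⟩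
  refine (eq_top_iff' _).mpr fun x ↦ ?_
  obtain ⟨k, rfl⟩ := QuotientGroup.mk_surjective x
  obtain ⟨k', hk', hk'k⟩ := mem_map.mp (hT' (hK k.2))
  rwa [← Subtype.ext hk'k]

end Group

section AbelianizationOfConjRelations

variable {H : Type*} [Group H] (τ : MulAut H) {α β : H}

theorem Abelianization.of_zpow_apply_right (hβ : τ (α * β * α⁻¹) = β) (n : ℤ) :
    of ((τ ^ n) β) = of β := by
  have hper : Function.Periodic (fun n : ℤ ↦ of ((τ ^ n) β)) 1 := fun n ↦ by
    conv_rhs => rw [← hβ]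
    simp only [zpow_add_one, MulAut.mul_apply, map_mul, map_inv, mul_inv_cancel_comm]
  simpa using hper.zsmul_eq n

theorem Abelianization.of_zpow_apply_left (hα : τ β = α) (hβ : τ (α * β * α⁻¹) = β) (n : ℤ) :
    of ((τ ^ n) α) = of β := by
  rw [← hα, ← MulAut.mul_apply, ← zpow_add_one, of_zpow_apply_right τ hβ]

end AbelianizationOfConjRelations

theorem nonempty_mulEquiv_int_of_zpowers_eq_top {A : Type*} [Group A]
    (θ : A →* Multiplicative ℤ) {x : A} (hθ : θ x = ofAdd 1) (hx : zpowers x = ⊤) :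
    Nonempty (A ≃* Multiplicative ℤ) := by
  have : Infinite A := Infinite.of_surjective θ fun n ↦ ⟨x ^ toAdd n, by simp [hθ, ← ofAdd_zsmul]⟩
  exact ⟨(intEquivOfZPowersEqTop x hx).symm⟩

namespace grels

def a : PresentedGroup grels := .of 0
def b : PresentedGroup grels := .of 1
def t : PresentedGroup grels := .of 2

theorem inv_t_mul_a_mul_t : t⁻¹ * a * t = b := by
  have h := PresentedGroup.mk_eq_mk_of_mul_inv_mem (rels := grels)
    (x := (FreeGroup.of 2)⁻¹ * FreeGroup.of 0 * FreeGroup.of 2) (Set.mem_insert _ _)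
  simp only [map_mul, map_inv] at h
  exact h

theorem inv_t_mul_b_mul_t : t⁻¹ * b * t = a * b * a⁻¹ := by
  have h := PresentedGroup.mk_eq_mk_of_mul_inv_mem (rels := grels)
    (x := (FreeGroup.of 2)⁻¹ * FreeGroup.of 1 * FreeGroup.of 2) (Set.mem_insert_of_mem _ rfl)
  simp only [map_mul, map_inv] at h
  exact h

theorem conj_t_b : MulAut.conj t b = a := by
  rw [MulAut.conj_apply, ← inv_t_mul_a_mul_t]; group

theorem conj_t_aba : MulAut.conj t (a * b * a⁻¹) = b := by
  rw [MulAut.conj_apply, ← inv_t_mul_b_mul_t]; group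

theorem closure_insert_t : closure (insert t {a, b}) = ⊤ :=
  (eq_top_iff' _).mpr <| PresentedGroup.generated_by _ _ fun j ↦ by
    fin_cases j <;> exact subset_closure (by simp [a, b, t])

def abDegree : PresentedGroup grels →* Multiplicative ℤ :=
  PresentedGroup.toGroup (f := fun i ↦ if i = 2 then 1 else ofAdd 1) <| by
    rintro r (rfl | rfl) <;> simp

theorem abDegree_b : abDegree b = ofAdd 1 := PresentedGroup.toGroup.of _

theorem zpowers_of_b_eq_top {K : Subgroup (PresentedGroup grels)} [K.Normal]
    (hab : {a, b} ⊆ (K : Set (PresentedGroup grels)))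
    (hK : K ≤ zpowersConjClosure t {a, b}) :
    zpowers (Abelianization.of (⟨b, hab (.inr rfl)⟩ : K)) = ⊤ := by
  set τ : MulAut K := MulAut.conjNormal t
  set α : K := ⟨a, hab (.inl rfl)⟩
  set β : K := ⟨b, hab (.inr rfl)⟩
  have hα : τ β = α := Subtype.ext (by rw [MulAut.conjNormal_apply]; exact conj_t_b)
  have hβ : τ (α * β * α⁻¹) = β := Subtype.ext (by rw [MulAut.conjNormal_apply]; exact conj_t_aba)
  refine Abelianization.zpowers_eq_top_of_le_closure hK (fun y hy ↦ ?_) (fun k hk ↦ ?_)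
  · exact zpowersConjClosure_le t hab (subset_closure hy)
  · obtain ⟨n, x, hx, hkx⟩ := Set.mem_iUnion.mp hk
    obtain rfl : k = (τ ^ n) ⟨x, hab hx⟩ :=
      Subtype.ext (by rw [MulAut.conjNormal_zpow_apply]; exact hkx.symm)
    rcases hx with rfl | rfl
    · exact Abelianization.of_zpow_apply_left τ hα hβ n ▸ mem_zpowers _
    · exact Abelianization.of_zpow_apply_right τ hβ n ▸ mem_zpowers _

end grels

open grels

theorem stmt_8 (φ : PresentedGroup grels →* Multiplicative ℤ)
    (ht : φ (PresentedGroup.of 2) = Multiplicative.ofAdd 1)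
    (ha : φ (PresentedGroup.of 0) = 1) (hb : φ (PresentedGroup.of 1) = 1) :
    Nonempty (Abelianization φ.ker ≃* Multiplicative ℤ) := by
  have hab : {a, b} ⊆ (φ.ker : Set (PresentedGroup grels)) := by
    simp [Set.insert_subset_iff, a, b, ha, hb]
  have hSK : zpowersConjClosure t {a, b} ≤ φ.ker := zpowersConjClosure_le t hab
  have := zpowersConjClosure_normal closure_insert_t
  have hKS : φ.ker ≤ zpowersConjClosure t {a, b} :=
    ker_le_of_sup_zpowers_eq_top ht hSK (zpowersConjClosure_sup_zpowers closure_insert_t)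
  refine nonempty_mulEquiv_int_of_zpowers_eq_top (Abelianization.lift (abDegree.comp φ.ker.subtype))
    ?_ (zpowers_of_b_eq_top hab hKS)
  rw [Abelianization.lift_apply_of]
  exact abDegree_b
end

section
/- The kernel of the homomorphism ψ : G → ℤ with ψ(a) = ψ(b) = ψ(t) = 1, where G = ⟨a, b, t | t⁻¹at = b, t⁻¹bt = aba⁻¹⟩, is a free group of rank 3. -/
open FreeGroup SemidirectProduct

def MonoidHom.kerCompMulEquiv {G N P : Type*} [Group G] [Group N] [Group P]
    (g : N →* P) (e : G ≃* N) : (g.comp (e : G →* N)).ker ≃* g.ker :=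
  (MulEquiv.subgroupCongr (g.ker_comp_mulEquiv e)).trans (e.symm.subgroupMap g.ker).symm

noncomputable def SemidirectProduct.kerRightHomEquiv {N K : Type*} [Group N] [Group K]
    (φ : K →* MulAut N) : (rightHom : N ⋊[φ] K →* K).ker ≃* N :=
  (MulEquiv.subgroupCongr range_inl_eq_ker_rightHom).symm.trans
    (MonoidHom.ofInjective inl_injective).symm

theorem MonoidHom.map_zpow_apply_eq_conj_zpow {N G : Type*} [Group N] [Group G] (f : N →* G)
    (θ : MulAut N) (g : G) (h : ∀ n, f (θ n) = g * f n * g⁻¹) (k : ℤ) (n : N) :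
    f ((θ ^ k) n) = g ^ k * f n * (g ^ k)⁻¹ := by
  have h_inv (n : N) : f (θ⁻¹ n) = g⁻¹ * f n * g := by
    conv_rhs => rw [← MulAut.apply_inv_self N θ n, h]
    group
  induction k using Int.induction_on generalizing n with
  | zero => simp
  | succ k ih => rw [zpow_add_one, MulAut.mul_apply, ih, h, zpow_add_one]; group
  | pred k ih => rw [zpow_sub_one, MulAut.mul_apply, ih, h_inv, zpow_sub_one]; group

namespace Grels

def θ : MulAut (FreeGroup (Fin 3)) :=
  MonoidHom.toMulEquiv (FreeGroup.lift ![of 1, of 2, (of 0)⁻¹ * of 2 * of 2])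
    (FreeGroup.lift ![of 1 * of 1 * (of 2)⁻¹, of 0, of 1])
    (by ext i; fin_cases i <;> simp [mul_assoc])
    (by ext i; fin_cases i <;> simp [mul_assoc])

@[simp] lemma θ_of_zero : θ (of 0) = of 1 := rfl
@[simp] lemma θ_of_one : θ (of 1) = of 2 := rfl
@[simp] lemma θ_of_two : θ (of 2) = (of 0)⁻¹ * of 2 * of 2 := rfl

abbrev H := FreeGroup (Fin 3) ⋊[zpowersHom _ θ] Multiplicative ℤ

def T : H := inr (Multiplicative.ofAdd 1)

lemma inl_θ_symm (w : FreeGroup (Fin 3)) : (inl (θ.symm w) : H) = T⁻¹ * inl w * T := by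
  simpa [T] using inl_aut_inv (φ := zpowersHom _ θ) (Multiplicative.ofAdd 1) w

abbrev G := PresentedGroup grels

def a : G := .of 0
def b : G := .of 1
def t : G := .of 2

lemma t_inv_mul_a_mul_t : t⁻¹ * a * t = b := by
  simpa [a, b, t, PresentedGroup.of] using
    PresentedGroup.mk_eq_mk_of_mul_inv_mem (rels := grels) (Or.inl rfl)

lemma t_inv_mul_b_mul_t : t⁻¹ * b * t = a * b * a⁻¹ := by
  simpa [a, b, t, PresentedGroup.of] using
    PresentedGroup.mk_eq_mk_of_mul_inv_mem (rels := grels) (Or.inr rfl)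

lemma a_conj_eq : a * (t⁻¹ * a * t) * a⁻¹ = t⁻¹ * (t⁻¹ * a * t) * t := by
  rw [t_inv_mul_a_mul_t, t_inv_mul_b_mul_t]

def toHGen : Fin 3 → H := ![inl (of 2) * T, inl (of 1) * T, T]

lemma lift_toHGen_of_mem (r : FreeGroup (Fin 3)) (hr : r ∈ grels) :
    FreeGroup.lift toHGen r = 1 := by
  rcases hr with rfl | rfl <;> ext <;>
    simp [toHGen, T, mul_left, mul_right, inv_left, inv_right, mul_assoc]

def toH : G →* H := PresentedGroup.toGroup lift_toHGen_of_mem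

@[simp] lemma toH_a : toH a = inl (of 2) * T := PresentedGroup.toGroup.of lift_toHGen_of_mem
@[simp] lemma toH_b : toH b = inl (of 1) * T := PresentedGroup.toGroup.of lift_toHGen_of_mem
@[simp] lemma toH_t : toH t = T := PresentedGroup.toGroup.of lift_toHGen_of_mem

def ofFree : FreeGroup (Fin 3) →* G := FreeGroup.lift ![t⁻¹ * t⁻¹ * a * t, t⁻¹ * a, a * t⁻¹]

@[simp] lemma ofFree_of_zero : ofFree (of 0) = t⁻¹ * t⁻¹ * a * t := rfl
@[simp] lemma ofFree_of_one : ofFree (of 1) = t⁻¹ * a := rfl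
@[simp] lemma ofFree_of_two : ofFree (of 2) = a * t⁻¹ := rfl

lemma ofFree_θ (w : FreeGroup (Fin 3)) : ofFree (θ w) = t * ofFree w * t⁻¹ := by
  suffices ofFree.comp (θ : FreeGroup (Fin 3) →* FreeGroup (Fin 3)) =
      (MulAut.conj t : G →* G).comp ofFree from DFunLike.congr_fun this w
  ext i
  fin_cases i
  · simp; group
  · simp
  · calc (t⁻¹ * t⁻¹ * a * t)⁻¹ * (a * t⁻¹) * (a * t⁻¹)
        = t⁻¹ * a⁻¹ * t ^ 2 * (a * (t⁻¹ * a * t) * a⁻¹) * a * t⁻¹ ^ 2 := by group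
      _ = t⁻¹ * a⁻¹ * t ^ 2 * (t⁻¹ * (t⁻¹ * a * t) * t) * a * t⁻¹ ^ 2 := by rw [a_conj_eq]
      _ = t * (a * t⁻¹) * t⁻¹ := by group

def fromH : H →* G :=
  SemidirectProduct.lift ofFree (zpowersHom G t) fun k => by
    refine MonoidHom.ext fun w => ?_
    simpa [← map_zpow] using ofFree.map_zpow_apply_eq_conj_zpow θ t ofFree_θ k.toAdd w

@[simp] lemma fromH_inl (w : FreeGroup (Fin 3)) : fromH (inl w) = ofFree w := lift_inl ..
@[simp] lemma fromH_T : fromH T = t := by simp [fromH, T]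

lemma fromH_comp_toH : fromH.comp toH = MonoidHom.id G := by
  refine PresentedGroup.ext fun i => ?_
  fin_cases i
  · change fromH (toH a) = a
    simp
  · change fromH (toH b) = b
    simpa [mul_assoc] using t_inv_mul_a_mul_t
  · change fromH (toH t) = t
    simp

lemma toH_comp_fromH : toH.comp fromH = MonoidHom.id H := by
  refine SemidirectProduct.hom_ext (FreeGroup.ext_hom _ _ fun i => ?_) (MonoidHom.ext_mint ?_)
  · fin_cases i
    · change toH (fromH (inl (of 0))) = inl (θ.symm (θ.symm (of 2)))
      rw [inl_θ_symm, inl_θ_symm]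
      simp
      group
    · change toH (fromH (inl (of 1))) = inl (θ.symm (of 2))
      rw [inl_θ_symm]
      simp
      group
    · simp
  · change toH (fromH T) = T
    simp

def equivH : G ≃* H := MonoidHom.toMulEquiv toH fromH fromH_comp_toH toH_comp_fromH

end Grels

theorem stmt_9 (ψ : PresentedGroup grels →* Multiplicative ℤ)
    (ht : ψ (PresentedGroup.of 2) = Multiplicative.ofAdd 1)
    (ha : ψ (PresentedGroup.of 0) = Multiplicative.ofAdd 1)
    (hb : ψ (PresentedGroup.of 1) = Multiplicative.ofAdd 1) :
    Nonempty (ψ.ker ≃* FreeGroup (Fin 3)) := by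
  obtain rfl : ψ = rightHom.comp (Grels.equivH : Grels.G →* Grels.H) := by
    refine PresentedGroup.ext fun i => ?_
    fin_cases i <;> simp [ha, hb, ht, Grels.equivH, Grels.toH, Grels.toHGen, Grels.T]
  exact ⟨(rightHom.kerCompMulEquiv Grels.equivH).trans (kerRightHomEquiv _)⟩
end

section
/- If a group G contains two conjugate subgroups L₁ and L₂ with L₁ a proper subgroup of L₂ and L₁ finitely generated, then G is not subgroup separable (LERF): specifically, L₁ is not closed in the profinite topology on G. -/
theorem stmt_11 (G : Type) [Group G] (L₁ L₂ : Subgroup G) (t : G)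
    (hconj : L₂ = Subgroup.map (MulAut.conj t).toMonoidHom L₁)
    (hlt : L₁ < L₂) (hfg : L₁.FG) :
    -- `G` is not subgroup separable …
    ¬ (∀ H : Subgroup G, H.FG → ∀ g ∉ H,
        ∃ (Q : Type) (_ : Group Q) (_ : Finite Q) (q : G →* Q),
          q g ∉ Subgroup.map q H) ∧
    -- … specifically, `L₁` is not closed in the profinite topology:
    ∃ g ∉ L₁, ∀ (Q : Type) (_ : Group Q) (_ : Finite Q) (q : G →* Q),
      q g ∈ Subgroup.map q L₁ := by
  obtain ⟨g, hg₂, hg₁⟩ := SetLike.exists_of_lt hlt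
  have key : ∀ (Q : Type) (_ : Group Q) (_ : Finite Q) (q : G →* Q),
      q g ∈ Subgroup.map q L₁ := by
    intro Q _ _ q
    have hmap : Subgroup.map q L₂ =
        Subgroup.map (MulAut.conj (q t)).toMonoidHom (Subgroup.map q L₁) := by
      rw [hconj, Subgroup.map_map, Subgroup.map_map]
      congr 1
      ext x
      simp [MulAut.conj, mul_assoc]
    have hle : Subgroup.map q L₁ ≤ Subgroup.map q L₂ :=
      Subgroup.map_mono hlt.le
    have hcard : Nat.card (Subgroup.map q L₂) ≤ Nat.card (Subgroup.map q L₁) := by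
      rw [hmap]
      exact le_of_eq (Nat.card_congr
        ((Subgroup.equivMapOfInjective _ _ (MulAut.conj (q t)).injective).symm.toEquiv))
    have heq : Subgroup.map q L₁ = Subgroup.map q L₂ :=
      Subgroup.eq_of_le_of_card_ge hle hcard
    rw [heq]
    exact Subgroup.mem_map_of_mem q hg₂
  refine ⟨fun h => ?_, g, hg₁, key⟩
  obtain ⟨Q, _, _, q, hq⟩ := h L₁ hfg g hg₁
  exact hq (key Q ‹_› ‹_› q)
end

section
/- Let G be a group, L₁ ≤ L₂ subgroups with L₁ ≠ L₂, and suppose L₂ = tL₁t⁻¹ for some t ∈ G. Then for every homomorphism q from G to a finite group, q(L₁) = q(L₂). -/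
theorem stmt_12 (G : Type) [Group G] (L₁ L₂ : Subgroup G) (t : G)
    (hle : L₁ ≤ L₂) (hne : L₁ ≠ L₂)
    (hconj : L₂ = Subgroup.map (MulAut.conj t).toMonoidHom L₁)
    (Q : Type) [Group Q] [Finite Q] (q : G →* Q) :
    Subgroup.map q L₁ = Subgroup.map q L₂ := by
  have key : Subgroup.map q L₂ = Subgroup.map (MulAut.conj (q t)).toMonoidHom (Subgroup.map q L₁) := by
    rw [hconj, Subgroup.map_map, Subgroup.map_map]
    congr 1
    ext x
    simp [mul_assoc]
  have hcard : Nat.card (Subgroup.map q L₂) = Nat.card (Subgroup.map q L₁) := by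
    rw [key]
    exact Nat.card_congr ((Subgroup.equivMapOfInjective _ _ (MulEquiv.injective _))).symm.toEquiv
  exact Subgroup.eq_of_le_of_card_ge (Subgroup.map_mono hle) hcard.le
end

section
/- The group G = ⟨a, b, t | t⁻¹at = b, t⁻¹bt = aba⁻¹⟩ is not subgroup separable: the subgroup L₁ = ⟨a, b⟩ is properly contained in its conjugate L₂ = tL₁t⁻¹, hence L₁ is not separable in G. -/
/-!
Conjugation by `t⁻¹` maps `L₁ = ⟨a, b⟩` onto `⟨b, aba⁻¹⟩ ≤ L₁`, so `L₁ ≤ tL₁t⁻¹ = L₂`. The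
inclusion is strict: letting `a, b, t` act on `ℚ` by `u ↦ 1 - u`, `u ↦ -2 - u`, `u ↦ -u/2`, the
subgroup `L₁` preserves `ℤ` while `tat⁻¹ : u ↦ -1/2 - u` does not. On the other hand, a subgroup
of finite index cannot be properly contained in one of its conjugates, as both have the same
index; applied to `L₁ N` for a finite-index normal `N ≤ K`, this puts `L₂` inside every
finite-index `K ⊇ L₁`.
-/

open Pointwise PresentedGroup

namespace Subgroup

variable {Γ : Type*} [Group Γ]

theorem map_conj_eq_of_le_map_conj {M : Subgroup Γ} [M.FiniteIndex] {g : Γ}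
    (h : M ≤ M.map (MulAut.conj g)) : M.map (MulAut.conj g) = M := by
  by_contra hne
  have := index_strictAnti (lt_of_le_of_ne h (Ne.symm hne))
  exact this.ne (index_map_equiv M _)

theorem map_conj_le_of_le_map_conj {H K : Subgroup Γ} [K.FiniteIndex] {g : Γ}
    (hH : H ≤ H.map (MulAut.conj g)) (hK : H ≤ K) :
    H.map (MulAut.conj g) ≤ K := by
  have : (H ⊔ K.normalCore).FiniteIndex := finiteIndex_of_le le_sup_right
  have hsup : H ⊔ K.normalCore ≤ (H ⊔ K.normalCore).map (MulAut.conj g) := by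
    rw [map_sup, Normal.map_conj_eq K.normalCore g]
    exact sup_le_sup_right hH _
  calc H.map (MulAut.conj g)
      ≤ (H ⊔ K.normalCore).map (MulAut.conj g) := map_mono le_sup_left
    _ = H ⊔ K.normalCore := map_conj_eq_of_le_map_conj hsup
    _ ≤ K := sup_le hK K.normalCore_le

end Subgroup

namespace grels

theorem conj_of_zero :
    (of 2)⁻¹ * of 0 * of 2 = (of 1 : PresentedGroup grels) :=
  mul_inv_eq_one.mp (one_of_mem (Or.inl rfl))

theorem conj_of_one :
    (of 2)⁻¹ * of 1 * of 2 = (of 0 * of 1 * (of 0)⁻¹ : PresentedGroup grels) :=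
  mul_inv_eq_one.mp (one_of_mem (Or.inr rfl))

theorem closure_le_map_conj :
    Subgroup.closure {of 0, of 1} ≤
      (Subgroup.closure {(of 0 : PresentedGroup grels), of 1}).map
        (MulAut.conj (of 2)).toMonoidHom := by
  have ha : (of 0 : PresentedGroup grels) ∈ Subgroup.closure {of 0, of 1} :=
    Subgroup.subset_closure (by simp)
  have hb : (of 1 : PresentedGroup grels) ∈ Subgroup.closure {of 0, of 1} :=
    Subgroup.subset_closure (by simp)
  rw [Subgroup.closure_le]
  rintro x (rfl | rfl)
  · refine ⟨of 1, hb, ?_⟩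
    rw [MulEquiv.coe_toMonoidHom, MulAut.conj_apply, ← conj_of_zero]
    group
  · refine ⟨of 0 * of 1 * (of 0)⁻¹, mul_mem (mul_mem ha hb) (inv_mem ha), ?_⟩
    rw [MulEquiv.coe_toMonoidHom, MulAut.conj_apply, ← conj_of_one]
    group

def affinePerm : Fin 3 → Equiv.Perm ℚ :=
  ![Equiv.subLeft 1, Equiv.subLeft (-2), Equiv.divRight₀ (-2) (by norm_num)]

theorem affinePerm_rels : ∀ r ∈ grels, FreeGroup.lift affinePerm r = 1 := by
  rintro r (rfl | rfl) <;>
  · ext u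
    simp only [affinePerm, map_mul, map_inv, mul_inv_rev, inv_inv, FreeGroup.lift_apply_of,
      Matrix.cons_val, Matrix.cons_val_zero, Matrix.cons_val_one, Equiv.Perm.coe_mul,
      Equiv.Perm.coe_inv, Equiv.Perm.coe_one, Function.comp_apply, id_eq, Equiv.subLeft_apply,
      Equiv.subLeft_symm_apply, Equiv.divRight₀_apply, Equiv.divRight₀_symm_apply]
    ring

def affineRep : PresentedGroup grels →* Equiv.Perm ℚ := toGroup affinePerm_rels

theorem subLeft_intCast_mem_stabilizer (n : ℤ) :
    Equiv.subLeft (n : ℚ) ∈ MulAction.stabilizer (Equiv.Perm ℚ) (Set.range ((↑) : ℤ → ℚ)) := by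
  rw [MulAction.mem_stabilizer_iff]
  ext x
  simp only [Set.mem_smul_set, Set.mem_range, Equiv.Perm.smul_def, Equiv.subLeft_apply]
  constructor
  · rintro ⟨_, ⟨m, rfl⟩, rfl⟩
    exact ⟨n - m, by push_cast; ring⟩
  · rintro ⟨m, rfl⟩
    exact ⟨_, ⟨n - m, rfl⟩, by push_cast; ring⟩

theorem closure_le_comap_stabilizer :
    Subgroup.closure {(of 0 : PresentedGroup grels), of 1} ≤
      (MulAction.stabilizer (Equiv.Perm ℚ) (Set.range ((↑) : ℤ → ℚ))).comap affineRep := by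
  rw [Subgroup.closure_le]
  rintro x (rfl | rfl)
  · simpa [affineRep, affinePerm] using subLeft_intCast_mem_stabilizer 1
  · simpa [affineRep, affinePerm] using subLeft_intCast_mem_stabilizer (-2)

theorem conj_of_zero_notMem_closure :
    of 2 * of 0 * (of 2)⁻¹ ∉ Subgroup.closure {(of 0 : PresentedGroup grels), of 1} := by
  intro h
  have hstab := MulAction.mem_stabilizer_iff.mp (closure_le_comap_stabilizer h)
  have : (-2⁻¹ : ℚ) ∈ Set.range ((↑) : ℤ → ℚ) := by
    rw [← hstab]
    refine ⟨0, ⟨0, rfl⟩, ?_⟩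
    simp [affineRep, affinePerm, Equiv.Perm.smul_def]
  obtain ⟨m, hm⟩ := this
  have : (2 * m : ℚ) = -1 := by rw [hm]; norm_num
  norm_cast at this
  omega

end grels

theorem stmt_13 :
    ∀ L₁ L₂ : Subgroup (PresentedGroup grels),
      L₁ = Subgroup.closure {PresentedGroup.of 0, PresentedGroup.of 1} →
      L₂ = Subgroup.map
        (MulAut.conj (PresentedGroup.of 2 : PresentedGroup grels)).toMonoidHom L₁ →
      L₁ < L₂ ∧
      -- `L₁` is not separable: it is not an intersection of finite-index subgroups
      L₁ ≠ ⨅ K ∈ {K : Subgroup (PresentedGroup grels) | L₁ ≤ K ∧ K.index ≠ 0}, K := by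
  intro L₁ L₂ hL₁ hL₂
  have hle : L₁ ≤ L₂ := by
    subst hL₁ hL₂
    exact grels.closure_le_map_conj
  have hmem : of 2 * of 0 * (of 2)⁻¹ ∈ L₂ :=
    hL₂ ▸ ⟨of 0, hL₁ ▸ Subgroup.subset_closure (by simp), rfl⟩
  have hnotMem : of 2 * of 0 * (of 2)⁻¹ ∉ L₁ := hL₁ ▸ grels.conj_of_zero_notMem_closure
  have hsep : L₂ ≤ ⨅ K ∈ {K | L₁ ≤ K ∧ K.index ≠ 0}, K := by
    refine le_iInf₂ fun K ⟨hK, hindex⟩ => ?_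
    have : K.FiniteIndex := ⟨hindex⟩
    subst hL₂
    exact Subgroup.map_conj_le_of_le_map_conj hle hK
  exact ⟨lt_of_le_of_ne hle fun h => hnotMem (h ▸ hmem), fun h => hnotMem (h ▸ hsep hmem)⟩
end
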